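/- arXiv:2409.19165 — 11 statements merged into one kernel-verified Lean document; each statement's English description precedes it below -/
import Mathlib

section
/- Let P be a convex, centrally symmetric subset of the plane. If P contains the point (0, 7.5), a point (x, -10) for some real x, a point (10, -y) for some y in [0,5], and a point (t, 10-t) for some real t, then P contains either all four points (0,4), (4,-4), (4,0), (4,4), or all four points (0,-4), (4,-8), (4,-4), (4,0). -/
/-!
The line `x = 4` meets `P` in a vertical segment. The chords from `(0, ±7.5)` to `(10, -y)`
cross it at heights `-4.5 - 0.4 y ≤ -4.5` and `4.5 - 0.4 y ≥ 0`, so it suffices that the segment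
reaches height `4` or depth `-8`. One of the chords joining two of `±(0, 7.5)`, `(10, -y)`,
`±(t, 10 - t)` crosses `x = 4` high or low enough; which one depends on `t` and `y`.
-/

open Set

lemma Convex.mk_mem_of_le_of_le {E : Type*} [AddCommGroup E] [Module ℝ E] {P : Set (E × ℝ)}
    (hP : Convex ℝ P) {u : E} {a b c : ℝ} (ha : (u, a) ∈ P) (hb : (u, b) ∈ P)
    (hac : a ≤ c) (hcb : c ≤ b) : (u, c) ∈ P := by
  apply hP.segment_subset ha hb
  rw [← Prod.image_mk_segment_right, segment_eq_Icc (hac.trans hcb)]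
  exact mem_image_of_mem _ ⟨hac, hcb⟩

lemma Convex.mk_div_mem_of_le_of_le {P : Set (ℝ × ℝ)} (hP : Convex ℝ P)
    {x₁ y₁ x₂ y₂ c : ℝ} (h₁ : (x₁, y₁) ∈ P) (h₂ : (x₂, y₂) ∈ P)
    (hx₁ : x₁ ≤ c) (hx₂ : c ≤ x₂) (hx : x₁ < x₂) :
    (c, (y₁ * (x₂ - c) + y₂ * (c - x₁)) / (x₂ - x₁)) ∈ P := by
  have hd : 0 < x₂ - x₁ := sub_pos.mpr hx
  convert hP h₁ h₂ (div_nonneg (sub_nonneg.mpr hx₂) hd.le)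
    (div_nonneg (sub_nonneg.mpr hx₁) hd.le) (by field_simp; ring) using 1
  ext
  · simp only [Prod.smul_mk, Prod.mk_add_mk, smul_eq_mul]
    field_simp
    ring
  · simp only [Prod.smul_mk, Prod.mk_add_mk, smul_eq_mul]
    field_simp

lemma exists_ge_four_or_le_neg_eight {P : Set (ℝ × ℝ)} (hP : Convex ℝ P) {y t : ℝ}
    (hy₀ : 0 ≤ y) (hy₅ : y ≤ 5) (hA : ((0 : ℝ), (7.5 : ℝ)) ∈ P)
    (hA' : ((0 : ℝ), (-7.5 : ℝ)) ∈ P) (hC : ((10 : ℝ), -y) ∈ P)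
    (hD : (t, 10 - t) ∈ P) (hD' : (-t, t - 10) ∈ P) :
    (∃ h, 4 ≤ h ∧ ((4 : ℝ), h) ∈ P) ∨ ∃ l, l ≤ -8 ∧ ((4 : ℝ), l) ∈ P := by
  rcases le_or_gt t (-4) with ht | ht
  · refine Or.inr ⟨_, ?_, hP.mk_div_mem_of_le_of_le hA' hD' (by norm_num) (by linarith)
      (by linarith)⟩
    rw [div_le_iff₀ (by linarith)]
    linarith
  rcases le_or_gt 4 t with ht₄ | ht₄
  · rcases le_or_gt t 20 with ht₂₀ | ht₂₀
    · refine Or.inl ⟨_, ?_, hP.mk_div_mem_of_le_of_le hA hD (by norm_num) ht₄ (by linarith)⟩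
      rw [le_div_iff₀ (by linarith)]
      linarith
    · refine Or.inr ⟨_, ?_, hP.mk_div_mem_of_le_of_le hA' hD (by norm_num) ht₄ (by linarith)⟩
      rw [div_le_iff₀ (by linarith)]
      linarith
  rcases le_or_gt (y * (4 - t)) (2 * (10 - t)) with hy | hy
  · refine Or.inl ⟨_, ?_, hP.mk_div_mem_of_le_of_le hD hC ht₄.le (by norm_num) (by linarith)⟩
    rw [le_div_iff₀ (by linarith)]
    nlinarith
  · refine Or.inr ⟨_, ?_, hP.mk_div_mem_of_le_of_le hD' hC (by linarith) (by norm_num)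
      (by linarith)⟩
    have ht₀ : t < 0 := by nlinarith
    rw [div_le_iff₀ (by linarith)]
    nlinarith [mul_nonneg (by linarith : (0 : ℝ) ≤ -t) hy₀]

theorem stmt_0_general (P : Set (ℝ × ℝ)) (hconv : Convex ℝ P)
    (hsymm : ∀ p ∈ P, -p ∈ P)
    (h1 : ((0 : ℝ), (7.5 : ℝ)) ∈ P)
    (h3 : ∃ y : ℝ, 0 ≤ y ∧ y ≤ 5 ∧ ((10 : ℝ), -y) ∈ P)
    (h4 : ∃ t : ℝ, ((t, 10 - t) ∈ P)) :
    (((0 : ℝ), (4 : ℝ)) ∈ P ∧ ((4 : ℝ), (-4 : ℝ)) ∈ P ∧ ((4 : ℝ), (0 : ℝ)) ∈ P ∧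
      ((4 : ℝ), (4 : ℝ)) ∈ P) ∨
    (((0 : ℝ), (-4 : ℝ)) ∈ P ∧ ((4 : ℝ), (-8 : ℝ)) ∈ P ∧ ((4 : ℝ), (-4 : ℝ)) ∈ P ∧
      ((4 : ℝ), (0 : ℝ)) ∈ P) := by
  obtain ⟨y, hy₀, hy₅, hC⟩ := h3
  obtain ⟨t, hD⟩ := h4
  have hA' : ((0 : ℝ), (-7.5 : ℝ)) ∈ P := by simpa using hsymm _ h1
  have hD' : (-t, t - 10) ∈ P := by simpa using hsymm _ hD
  have hL := hconv.mk_div_mem_of_le_of_le hA' hC (c := 4) (by norm_num) (by norm_num)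
    (by norm_num)
  have hH := hconv.mk_div_mem_of_le_of_le h1 hC (c := 4) (by norm_num) (by norm_num)
    (by norm_num)
  rcases exists_ge_four_or_le_neg_eight hconv hy₀ hy₅ h1 hA' hC hD hD' with
    ⟨h, hh_ge, hh⟩ | ⟨l, hl_le, hl⟩
  · exact Or.inl ⟨hconv.mk_mem_of_le_of_le hA' h1 (by norm_num) (by norm_num),
      hconv.mk_mem_of_le_of_le hL hh (by linarith) (by linarith),
      hconv.mk_mem_of_le_of_le hL hh (by linarith) (by linarith),
      hconv.mk_mem_of_le_of_le hL hh (by linarith) (by linarith)⟩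
  · exact Or.inr ⟨hconv.mk_mem_of_le_of_le hA' h1 (by norm_num) (by norm_num),
      hconv.mk_mem_of_le_of_le hl hH (by linarith) (by linarith),
      hconv.mk_mem_of_le_of_le hl hH (by linarith) (by linarith),
      hconv.mk_mem_of_le_of_le hl hH (by linarith) (by linarith)⟩

theorem stmt_0 (P : Set (ℝ × ℝ)) (hconv : Convex ℝ P)
    (hsymm : ∀ p ∈ P, -p ∈ P)
    (h1 : ((0 : ℝ), (7.5 : ℝ)) ∈ P)
    (h2 : ∃ x : ℝ, ((x, (-10 : ℝ)) ∈ P))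
    (h3 : ∃ y : ℝ, 0 ≤ y ∧ y ≤ 5 ∧ ((10 : ℝ), -y) ∈ P)
    (h4 : ∃ t : ℝ, ((t, 10 - t) ∈ P)) :
    (((0 : ℝ), (4 : ℝ)) ∈ P ∧ ((4 : ℝ), (-4 : ℝ)) ∈ P ∧ ((4 : ℝ), (0 : ℝ)) ∈ P ∧
      ((4 : ℝ), (4 : ℝ)) ∈ P) ∨
    (((0 : ℝ), (-4 : ℝ)) ∈ P ∧ ((4 : ℝ), (-8 : ℝ)) ∈ P ∧ ((4 : ℝ), (-4 : ℝ)) ∈ P ∧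
      ((4 : ℝ), (0 : ℝ)) ∈ P) :=
  stmt_0_general P hconv hsymm h1 h3 h4
end

section
/- Let P be a convex subset of the plane containing the points (0,0), (0,7.5), (-x,10) for some x ≤ 0, and (10,-y) for some y ∈ [0,5]. Then (4,4) ∈ P. -/
/-!
With `u = -x ≥ 0` and `D = 50 + 15u + 2uy > 0`, the point `(4, 4)` is an explicit convex
combination of `(0, 0)`, `(0, 7.5)`, `(u, 10)` and `(10, -y)`. The weights solving the three
linear constraints form a one-parameter family; giving `(u, 10)` the weight `6y/D` keeps all four
nonnegative on the whole range `0 ≤ u`, `0 ≤ y ≤ 5` (at `u = 0`, `y = 5` this value is forced), and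
makes the weight of the origin simply `(5 - y)/75`.
-/

theorem Convex.smul_add_smul_add_smul_add_smul_mem {R E : Type*} [Field R] [LinearOrder R]
    [IsStrictOrderedRing R] [AddCommGroup E] [Module R E] {s : Set E} (hs : Convex R s)
    {p q r w : E} (hp : p ∈ s) (hq : q ∈ s) (hr : r ∈ s) (hw : w ∈ s) {a b c d : R}
    (ha : 0 ≤ a) (hb : 0 ≤ b) (hc : 0 ≤ c) (hd : 0 ≤ d) (habcd : a + b + c + d = 1) :
    a • p + b • q + c • r + d • w ∈ s := by
  have h := hs.sum_mem (t := Finset.univ) (w := ![a, b, c, d]) (z := ![p, q, r, w])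
    (by simp [Fin.forall_fin_succ, ha, hb, hc, hd]) (by simp [Fin.sum_univ_four, habcd])
    (by simp [Fin.forall_fin_succ, hp, hq, hr, hw])
  simpa [Fin.sum_univ_four] using h

section Weights

variable {u y D : ℝ}

theorem four_four_weights_sum_eq_one (hD : 50 + 15 * u + 2 * u * y = D) (hD0 : D ≠ 0) :
    (5 - y) / 75 + 2 * (200 * (5 - y) + u * (300 + 70 * y + y ^ 2)) / (75 * D)
      + 6 * y / D + (100 + 30 * u + u * y) / (5 * D) = 1 := by
  field_simp
  rw [← hD]
  ring

theorem four_four_eq_weighted_sum (hD : 50 + 15 * u + 2 * u * y = D) (hD0 : D ≠ 0) :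
    ((4 : ℝ), (4 : ℝ)) =
      ((5 - y) / 75) • ((0 : ℝ), (0 : ℝ))
        + (2 * (200 * (5 - y) + u * (300 + 70 * y + y ^ 2)) / (75 * D)) • ((0 : ℝ), (7.5 : ℝ))
        + (6 * y / D) • (u, (10 : ℝ))
        + ((100 + 30 * u + u * y) / (5 * D)) • ((10 : ℝ), -y) := by
  simp only [Prod.smul_mk, Prod.mk_add_mk, Prod.ext_iff, smul_eq_mul]
  constructor <;> (field_simp; rw [← hD]; ring)

end Weights

theorem stmt_2 (P : Set (ℝ × ℝ)) (hconv : Convex ℝ P)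
    (h0 : ((0 : ℝ), (0 : ℝ)) ∈ P) (h1 : ((0 : ℝ), (7.5 : ℝ)) ∈ P)
    (x : ℝ) (hx : x ≤ 0) (h2 : ((-x, (10 : ℝ)) ∈ P))
    (y : ℝ) (hy0 : 0 ≤ y) (hy5 : y ≤ 5) (h3 : ((10 : ℝ), -y) ∈ P) :
    ((4 : ℝ), (4 : ℝ)) ∈ P := by
  have hu : 0 ≤ -x := by linarith
  have hy : 0 ≤ 5 - y := by linarith
  set D := 50 + 15 * -x + 2 * -x * y with hD
  have hD0 : 0 < D := by positivity
  rw [four_four_eq_weighted_sum hD.symm hD0.ne']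
  exact hconv.smul_add_smul_add_smul_add_smul_mem h0 h1 h2 h3 (by positivity) (by positivity)
    (by positivity) (by positivity) (four_four_weights_sum_eq_one hD.symm hD0.ne')
end

section
/- Let y ∈ [0,5] and let P be a convex subset of the plane containing the points (0,-7.5), (10,-y), and (x,-10) for some x with (20-4y)/(8-y) ≤ x ≤ 20. Then (4,-8) ∈ P. -/
/-!
With `A = (0, -7.5)`, `B = (10, -y)`, `C = (x, -10)`, the point `(4, -8)` has barycentric
coordinates proportional to `(2 (x (8 - y) - (20 - 4y)), 20 - x, 70 - 8y)` with respect to the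
triangle `ABC` (four times the signed areas of the opposite subtriangles). The bounds on `x` say
that the first two are nonnegative, and `y ≤ 5` makes the third positive, so `(4, -8)` lies in the
convex hull of `A, B, C`.
-/

theorem Convex.mem_of_add_add_smul_eq {𝕜 E : Type*} [Field 𝕜] [LinearOrder 𝕜]
    [IsStrictOrderedRing 𝕜] [AddCommGroup E] [Module 𝕜 E] {s : Set E} (hs : Convex 𝕜 s)
    {u v w p : E} (hu : u ∈ s) (hv : v ∈ s) (hw : w ∈ s) {a b c : 𝕜}
    (ha : 0 ≤ a) (hb : 0 ≤ b) (hc : 0 ≤ c) (habc : 0 < a + b + c)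
    (h : a • u + b • v + c • w = (a + b + c) • p) : p ∈ s := by
  have hcenter : (Finset.univ : Finset (Fin 3)).centerMass ![a, b, c] ![u, v, w] = p := by
    rw [Finset.centerMass, Fin.sum_univ_three, Fin.sum_univ_three]
    change (a + b + c)⁻¹ • (a • u + b • v + c • w) = p
    rw [h, inv_smul_smul₀ habc.ne']
  rw [← hcenter]
  refine hs.centerMass_mem ?_ (by simpa [Fin.sum_univ_three] using habc) ?_
  · simp [Fin.forall_fin_succ, ha, hb, hc]
  · simp [Fin.forall_fin_succ, hu, hv, hw]

theorem stmt_4_general (P : Set (ℝ × ℝ)) (hconv : Convex ℝ P)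
    (y : ℝ) (hy5 : y ≤ 5)
    (h1 : ((0 : ℝ), (-7.5 : ℝ)) ∈ P) (h2 : ((10 : ℝ), -y) ∈ P)
    (x : ℝ) (hxl : (20 - 4 * y) / (8 - y) ≤ x) (hxu : x ≤ 20)
    (h3 : ((x, (-10 : ℝ)) ∈ P)) :
    ((4 : ℝ), (-8 : ℝ)) ∈ P := by
  have hxl' : 20 - 4 * y ≤ x * (8 - y) := (div_le_iff₀ (by linarith)).mp hxl
  refine hconv.mem_of_add_add_smul_eq h1 h2 h3 (a := 2 * (x * (8 - y) - (20 - 4 * y)))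
    (b := 20 - x) (c := 70 - 8 * y) (by linarith) (by linarith) (by linarith) (by linarith) ?_
  simp only [Prod.smul_mk, smul_eq_mul, Prod.mk_add_mk, Prod.mk.injEq]
  constructor <;> ring

theorem stmt_4 (P : Set (ℝ × ℝ)) (hconv : Convex ℝ P)
    (y : ℝ) (hy0 : 0 ≤ y) (hy5 : y ≤ 5)
    (h1 : ((0 : ℝ), (-7.5 : ℝ)) ∈ P) (h2 : ((10 : ℝ), -y) ∈ P)
    (x : ℝ) (hxl : (20 - 4 * y) / (8 - y) ≤ x) (hxu : x ≤ 20)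
    (h3 : ((x, (-10 : ℝ)) ∈ P)) :
    ((4 : ℝ), (-8 : ℝ)) ∈ P :=
  stmt_4_general P hconv y hy5 h1 h2 x hxl hxu h3
end

section
/- Let P be a convex subset of the plane containing the points (0,0), (-x,10) for some x ∈ [0, 5/2], and (t, 10-t) for some t ∈ [5, 30]. Then (4,4) ∈ P. -/
/-! The segment from `(-x, 10)` to `(t, 10 - t)` crosses the diagonal at `(q, q)` with
`q = (10t + 10x - tx) / (2t + x)`, and `q ≥ 4` on the whole parameter range (with equality at
`x = 5/2`, `t = 30`). Since `P` also contains the origin, it contains `(4, 4) = (4/q) • (q, q)`. -/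

theorem diag_mem_segment {a₁ a₂ b₁ b₂ : ℝ} (ha : a₁ < a₂) (hb : b₂ ≤ b₁) :
    let q := (a₂ * b₁ - a₁ * b₂) / (a₂ - a₁ + (b₁ - b₂))
    (q, q) ∈ segment ℝ (a₁, a₂) (b₁, b₂) := by
  intro q
  have hD : 0 < a₂ - a₁ + (b₁ - b₂) := by linarith
  refine ⟨(b₁ - b₂) / (a₂ - a₁ + (b₁ - b₂)), (a₂ - a₁) / (a₂ - a₁ + (b₁ - b₂)),
    by positivity, div_nonneg (by linarith) hD.le, by field_simp; ring, ?_⟩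
  ext <;> simp only [Prod.smul_mk, Prod.mk_add_mk, smul_eq_mul, q] <;> field_simp <;> ring

theorem stmt_6 (P : Set (ℝ × ℝ)) (hconv : Convex ℝ P)
    (h0 : ((0 : ℝ), (0 : ℝ)) ∈ P)
    (x : ℝ) (hx0 : 0 ≤ x) (hx1 : x ≤ 5 / 2) (h1 : ((-x, (10 : ℝ)) ∈ P))
    (t : ℝ) (ht0 : 5 ≤ t) (ht1 : t ≤ 30) (h2 : ((t, 10 - t) ∈ P)) :
    ((4 : ℝ), (4 : ℝ)) ∈ P := by
  set q := (10 * t - -x * (10 - t)) / (10 - -x + (t - (10 - t))) with hq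
  have hqP : (q, q) ∈ P :=
    hconv.segment_subset h1 h2 (diag_mem_segment (by linarith) (by linarith))
  have hD : 0 < 10 - -x + (t - (10 - t)) := by linarith
  have hq4 : 4 ≤ q := by
    rw [hq, le_div_iff₀ hD]
    nlinarith [mul_nonneg (by linarith : (0 : ℝ) ≤ 5 / 2 - x) (by linarith : (0 : ℝ) ≤ t),
      mul_nonneg hx0 (by linarith : (0 : ℝ) ≤ 30 - t)]
  have hdiag : ((4 : ℝ), (4 : ℝ)) = (4 / q) • (q, q) := by
    ext <;> simp only [Prod.smul_mk, smul_eq_mul] <;> field_simp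
  rw [hdiag]
  exact hconv.smul_mem_of_zero_mem h0 hqP
    ⟨by positivity, (div_le_one (by linarith)).2 hq4⟩
end

section
/- Let P be a convex subset of the plane containing the points (0,0), (t,10-t) for some t ∈ [0,5], and (10,-y) for some y ∈ [0,5]. Then (4,4) ∈ P. -/
/-!
Write `A = (t, 10 - t)` and `B = (10, -y)`. Solving `b • A + c • B = (4, 4)` by Cramer's rule
(the denominator `D = ty + 10 (10 - t)` is `-det (A, B)`)
gives `b, c ≥ 0` with `b + c ≤ 1`, so `(4, 4)` is the convex combination
`(1 - b - c) • 0 + b • A + c • B` of three points of `P`.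
-/

theorem Convex.smul_add_smul_mem_of_zero_mem {𝕜 E : Type*} [Field 𝕜] [LinearOrder 𝕜]
    [IsStrictOrderedRing 𝕜] [AddCommGroup E] [Module 𝕜 E] {s : Set E} (hs : Convex 𝕜 s)
    (zero_mem : (0 : E) ∈ s) {x y : E} (hx : x ∈ s) (hy : y ∈ s) {a b : 𝕜} (ha : 0 ≤ a)
    (hb : 0 ≤ b) (hab : a + b ≤ 1) : a • x + b • y ∈ s := by
  have := hs.sum_mem (t := Finset.univ) (w := ![1 - a - b, a, b]) (z := ![0, x, y])
    (by intro i _; fin_cases i <;> simp <;> linarith) (by simp [Fin.sum_univ_three]; ring)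
    (by intro i _; fin_cases i <;> assumption)
  simpa [Fin.sum_univ_three] using this

theorem stmt_7 (P : Set (ℝ × ℝ)) (hconv : Convex ℝ P)
    (h0 : ((0 : ℝ), (0 : ℝ)) ∈ P)
    (t : ℝ) (ht0 : 0 ≤ t) (ht1 : t ≤ 5) (h1 : ((t, 10 - t) ∈ P))
    (y : ℝ) (hy0 : 0 ≤ y) (hy1 : y ≤ 5) (h2 : ((10 : ℝ), -y) ∈ P) :
    ((4 : ℝ), (4 : ℝ)) ∈ P := by
  have hD : 0 < t * y + 10 * (10 - t) := by nlinarith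
  set b := (4 * y + 40) / (t * y + 10 * (10 - t))
  set c := (40 - 8 * t) / (t * y + 10 * (10 - t))
  have hbc : b + c ≤ 1 := by
    rw [← add_div, div_le_one hD]
    -- `D - (b + c) D = ty - 2t - 4y + 20` is bilinear in `(t, y)` and nonnegative at the
    -- corners of `[0, 5]²`.
    nlinarith [mul_nonneg (sub_nonneg.2 ht1) (sub_nonneg.2 hy1), mul_nonneg ht0 (sub_nonneg.2 hy1),
      mul_nonneg ht0 hy0]
  have hcomb : b • ((t, 10 - t) : ℝ × ℝ) + c • ((10 : ℝ), -y) = ((4 : ℝ), (4 : ℝ)) := by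
    have hD0 := hD.ne'
    ext <;> simp only [b, c, Prod.smul_mk, Prod.mk_add_mk, smul_eq_mul, div_mul_eq_mul_div] <;>
      rw [← add_div, div_eq_iff hD0] <;> ring
  rw [← hcomb]
  exact hconv.smul_add_smul_mem_of_zero_mem h0 h1 h2 (by positivity)
    (div_nonneg (by linarith) hD.le) hbc
end

section
/- Let t ∈ [-1,0] and y ∈ [2,5], and let P be a convex, centrally symmetric subset of the plane containing the points (0,0), (t,10-t), and (10,-y). Then (4,-8) ∈ P or (4,4) ∈ P. -/
/-!
The vertical line `x = 4` meets the segment from `(10, -y)` to `(t, 10 - t)` at a height `s₁`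
and, by central symmetry, the segment from `(10, -y)` to `(-t, t - 10)` at a height `s₂`;
by convexity `P` contains the whole vertical segment between them. Always `s₂ ≤ 4` and
`-8 ≤ s₁`. If `s₁ ≥ 4` this segment contains `(4, 4)`; otherwise `y (4 - t) > 2 (10 - t)`,
which for `t ≤ 0` forces `s₂ ≤ -8`, and the segment contains `(4, -8)`.
-/

open Set

namespace Convex

variable {E : Type*} [AddCommGroup E] [Module ℝ E] {P : Set (E × ℝ)}

theorem mk_mem_of_le_of_le_s11 (hP : Convex ℝ P) {c : E} {u v w : ℝ} (hu : (c, u) ∈ P)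
    (hv : (c, v) ∈ P) (huw : u ≤ w) (hwv : w ≤ v) : (c, w) ∈ P := by
  refine hP.segment_subset hu hv ?_
  rw [← Prod.image_mk_segment_right, segment_eq_Icc (huw.trans hwv)]
  exact ⟨w, ⟨huw, hwv⟩, rfl⟩

theorem mk_add_div_mul_sub_mem {P : Set (ℝ × ℝ)} (hP : Convex ℝ P) {a b c u v : ℝ}
    (hu : (a, u) ∈ P) (hv : (b, v) ∈ P) (hab : a < b) (hac : a ≤ c) (hcb : c ≤ b) :
    (c, u + (c - a) / (b - a) * (v - u)) ∈ P := by
  have hba : 0 < b - a := sub_pos.2 hab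
  have hθ : (c - a) / (b - a) ∈ Icc (0 : ℝ) 1 :=
    ⟨div_nonneg (sub_nonneg.2 hac) hba.le, (div_le_one hba).2 (by linarith)⟩
  convert hP.add_smul_sub_mem hu hv hθ using 1
  ext
  · simp only [Prod.fst_add, Prod.smul_fst, Prod.fst_sub, smul_eq_mul]
    field_simp
    ring
  · simp

end Convex

theorem stmt_11_general (P : Set (ℝ × ℝ)) (hconv : Convex ℝ P)
    (hsymm : ∀ p ∈ P, -p ∈ P)
    (t : ℝ) (ht0 : -1 ≤ t) (ht1 : t ≤ 0)
    (y : ℝ) (hy0 : 2 ≤ y) (hy1 : y ≤ 5)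
    (h1 : ((t, 10 - t) ∈ P))
    (h2 : ((10 : ℝ), -y) ∈ P) :
    ((4 : ℝ), (-8 : ℝ)) ∈ P ∨ ((4 : ℝ), (4 : ℝ)) ∈ P := by
  have h1' : (-t, t - 10) ∈ P := by simpa using hsymm _ h1
  have hA := hconv.mk_add_div_mul_sub_mem (c := 4) h1 h2 (by linarith) (by linarith) (by norm_num)
  have hB := hconv.mk_add_div_mul_sub_mem (c := 4) h1' h2 (by linarith) (by linarith) (by norm_num)
  set s₁ := 10 - t + (4 - t) / (10 - t) * (-y - (10 - t))
  set s₂ := t - 10 + (4 - -t) / (10 - -t) * (-y - (t - 10))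
  have hs₁ : s₁ * (10 - t) = 60 - 6 * t - y * (4 - t) := by
    have : 10 - t ≠ 0 := by linarith
    simp only [s₁]; field_simp; ring
  have hs₂ : s₂ * (10 + t) = -60 + 6 * t - y * (4 + t) := by
    have : 10 + t ≠ 0 := by linarith
    simp only [s₂, sub_neg_eq_add]; field_simp; ring
  have hs₂_le : s₂ ≤ 4 := by nlinarith
  by_cases h : 4 ≤ s₁
  · exact Or.inr (hconv.mk_mem_of_le_of_le_s11 hB hA hs₂_le h)
  · have hy : 2 * (10 - t) < y * (4 - t) := by nlinarith
    have hy' : 20 + 14 * t ≤ y * (4 + t) := by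
      nlinarith [mul_le_mul_of_nonneg_left hy.le (show 0 ≤ 4 + t by linarith),
        mul_nonneg (neg_nonneg.2 ht1) (show 0 ≤ 2 - t by linarith)]
    have hs₂_le' : s₂ ≤ -8 := by nlinarith
    have hs₁_ge : -8 ≤ s₁ := by nlinarith
    exact Or.inl (hconv.mk_mem_of_le_of_le_s11 hB hA hs₂_le' hs₁_ge)

theorem stmt_11 (P : Set (ℝ × ℝ)) (hconv : Convex ℝ P)
    (hsymm : ∀ p ∈ P, -p ∈ P)
    (t : ℝ) (ht0 : -1 ≤ t) (ht1 : t ≤ 0)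
    (y : ℝ) (hy0 : 2 ≤ y) (hy1 : y ≤ 5)
    (h0 : ((0 : ℝ), (0 : ℝ)) ∈ P)
    (h1 : ((t, 10 - t) ∈ P))
    (h2 : ((10 : ℝ), -y) ∈ P) :
    ((4 : ℝ), (-8 : ℝ)) ∈ P ∨ ((4 : ℝ), (4 : ℝ)) ∈ P :=
  stmt_11_general P hconv hsymm t ht0 ht1 y hy0 hy1 h1 h2
end

section
/- Let H be an abelian group and τ : H → S₃ a group homomorphism (where S₃ is the symmetric group on three elements). For any h₁, h₂ ∈ H, at least one of τ(h₁), τ(h₂), τ(h₁ + h₂), τ(h₁ - h₂) is the identity permutation. -/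
/- Commuting non-identity permutations of three letters generate a cyclic subgroup of order 2
or 3, so the second one is the first one or its inverse. -/
theorem Equiv.Perm.eq_one_or_eq_one_or_mul_eq_one_or_mul_inv_eq_one_of_commute
    (a b : Equiv.Perm (Fin 3)) (h : a * b = b * a) :
    a = 1 ∨ b = 1 ∨ a * b = 1 ∨ a * b⁻¹ = 1 := by
  revert a b
  decide

theorem stmt_12 (H : Type*) [AddCommGroup H]
    (τ : H → Equiv.Perm (Fin 3))
    (hτ : ∀ a b : H, τ (a + b) = τ a * τ b)
    (h₁ h₂ : H) :
    τ h₁ = 1 ∨ τ h₂ = 1 ∨ τ (h₁ + h₂) = 1 ∨ τ (h₁ - h₂) = 1 := by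
  have hsub : τ (h₁ - h₂) = τ h₁ * (τ h₂)⁻¹ :=
    eq_mul_inv_of_mul_eq (by rw [← hτ, sub_add_cancel])
  have hcomm : τ h₁ * τ h₂ = τ h₂ * τ h₁ := by
    rw [← hτ, ← hτ, add_comm]
  rw [hτ, hsub]
  exact Equiv.Perm.eq_one_or_eq_one_or_mul_eq_one_or_mul_inv_eq_one_of_commute _ _ hcomm
end

section
/- Let A be a multiset whose elements all lie in {+1, -1, +10, -10, +11, -11}, such that the sum of the elements of A is divisible by 37 and the sum over A of h(a) is nonzero in ℤ², where h(1)=(1,0), h(-1)=(-1,0), h(10)=(0,1), h(-10)=(0,-1), h(11)=(1,1), h(-11)=(-1,-1). Then A has at least 7 elements (counted with multiplicity). -/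
/-!
`hmap` sends `±1, ±10, ±11` to the six unit vectors of the hexagonal norm
`max (|x|, |y|, |y - x|)` on `ℤ²`, and `a = x + 10 y` for `(x, y) = hmap a`. Hence
`v := Σ hmap a` satisfies `A.sum = v.1 + 10 * v.2` and, by the triangle inequality, has hexagonal
norm at most `card A`. The only vector of hexagonal norm at most `6` with `37 ∣ x + 10 y` is `0`,
because then `|x + 10 y| ≤ 66 < 74` forces `x + 10 y ∈ {-37, 0, 37}`.
-/

/-- The map `h` from the proof of Proposition 4.1. -/
def hmap (a : ℤ) : ℤ × ℤ :=
  if a = 1 then (1, 0)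
  else if a = -1 then (-1, 0)
  else if a = 10 then (0, 1)
  else if a = -10 then (0, -1)
  else if a = 11 then (1, 1)
  else if a = -11 then (-1, -1)
  else (0, 0)

def hexNorm (p : ℤ × ℤ) : ℤ :=
  max (max |p.1| |p.2|) |p.2 - p.1|

theorem hexNorm_zero : hexNorm 0 = 0 := by
  simp [hexNorm]

theorem hexNorm_add_le (p q : ℤ × ℤ) : hexNorm (p + q) ≤ hexNorm p + hexNorm q := by
  simp only [hexNorm, Prod.fst_add, Prod.snd_add, max_le_iff]
  refine ⟨⟨?_, ?_⟩, ?_⟩ <;> grind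

theorem hexNorm_multiset_sum_le (s : Multiset (ℤ × ℤ)) :
    hexNorm s.sum ≤ (s.map hexNorm).sum :=
  Multiset.le_sum_of_subadditive hexNorm hexNorm_zero.le hexNorm_add_le s

theorem eq_zero_of_hexNorm_le_six_of_dvd {p : ℤ × ℤ} (hp : hexNorm p ≤ 6)
    (hdvd : (37 : ℤ) ∣ p.1 + 10 * p.2) : p = 0 := by
  simp only [hexNorm, max_le_iff, abs_le] at hp
  obtain ⟨k, hk⟩ := hdvd
  have hk_small : k = -1 ∨ k = 0 ∨ k = 1 := by omega
  rcases hk_small with rfl | rfl | rfl <;> ext <;> simp only [Prod.fst_zero, Prod.snd_zero] <;> omega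

theorem hexNorm_hmap_le_one (a : ℤ) : hexNorm (hmap a) ≤ 1 := by
  unfold hmap
  split_ifs <;> simp [hexNorm]

theorem hmap_fst_add_ten_mul_snd {a : ℤ} (ha : a ∈ ({1, -1, 10, -10, 11, -11} : Set ℤ)) :
    (hmap a).1 + 10 * (hmap a).2 = a := by
  rcases ha with rfl | rfl | rfl | rfl | rfl | rfl <;> rfl

theorem hexNorm_sum_map_hmap_le_card (A : Multiset ℤ) :
    hexNorm (A.map hmap).sum ≤ Multiset.card A := by
  calc hexNorm (A.map hmap).sum
      ≤ ((A.map hmap).map hexNorm).sum := hexNorm_multiset_sum_le _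
    _ ≤ Multiset.card ((A.map hmap).map hexNorm) • 1 :=
        Multiset.sum_le_card_nsmul _ _ (by simpa using fun a _ ↦ hexNorm_hmap_le_one a)
    _ = Multiset.card A := by simp

theorem sum_eq_fst_add_ten_mul_snd (A : Multiset ℤ)
    (hA : ∀ a ∈ A, a ∈ ({1, -1, 10, -10, 11, -11} : Set ℤ)) :
    A.sum = (A.map hmap).sum.1 + 10 * (A.map hmap).sum.2 := by
  let L : ℤ × ℤ →+ ℤ := AddMonoidHom.fst ℤ ℤ + 10 • AddMonoidHom.snd ℤ ℤ
  have hL : ∀ a ∈ A, L (hmap a) = a := fun a ha ↦ by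
    simpa [L] using hmap_fst_add_ten_mul_snd (hA a ha)
  calc A.sum = (A.map fun a ↦ L (hmap a)).sum := by rw [Multiset.map_congr rfl hL, Multiset.map_id']
    _ = L (A.map hmap).sum := by rw [map_multiset_sum, Multiset.map_map]; rfl
    _ = _ := by simp [L]

theorem stmt_14 (A : Multiset ℤ)
    (hA : ∀ a ∈ A, a ∈ ({1, -1, 10, -10, 11, -11} : Set ℤ))
    (hsum : (37 : ℤ) ∣ A.sum)
    (hh : (A.map hmap).sum ≠ (0, 0)) :
    7 ≤ Multiset.card A := by
  by_contra! hcard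
  have hnorm : hexNorm (A.map hmap).sum ≤ 6 := by
    have := hexNorm_sum_map_hmap_le_card A
    omega
  rw [sum_eq_fst_add_ten_mul_snd A hA] at hsum
  exact hh (eq_zero_of_hexNorm_le_six_of_dvd hnorm hsum)
end

section
/- Let A be a multiset with elements from {+1, -10} such that the sum of A is divisible by 37 and the sum of h(a) over A is nonzero in ℤ², with h(1)=(1,0) and h(-10)=(0,-1). Then |A| ≥ 7, and this is tight: the multiset {1,1,1,-10,-10,-10,-10} has sum -37 and nonzero image under h. -/
/-- The map `h` restricted to the relevant values. -/
def hmap' (a : ℤ) : ℤ × ℤ :=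
  if a = 1 then (1, 0) else if a = -10 then (0, -1) else (0, 0)

theorem Multiset.sum_map_eq_count_nsmul_add_count_nsmul {α M : Type*} [DecidableEq α]
    [AddCommMonoid M] {A : Multiset α} {a b : α} (hab : a ≠ b)
    (hA : ∀ x ∈ A, x = a ∨ x = b) (f : α → M) :
    (A.map f).sum = A.count a • f a + A.count b • f b := by
  have hsub : A.toFinset ⊆ {a, b} := fun x hx => by
    simpa using hA x (Multiset.mem_toFinset.mp hx)
  rw [Finset.sum_multiset_map_count, ← Finset.sum_pair (f := fun x => A.count x • f x) hab]
  refine Finset.sum_subset hsub fun x _ hx => ?_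
  rw [Multiset.count_eq_zero.mpr (by simpa using hx), zero_smul]

theorem seven_le_of_dvd_sub_ten_mul {m n : ℕ} (hdvd : (37 : ℤ) ∣ m - 10 * n)
    (hmn : m ≠ 0 ∨ n ≠ 0) : 7 ≤ m + n := by
  by_contra! hlt
  obtain ⟨k, hk⟩ := hdvd
  -- `m - 10 * n` lies in `[-60, 6]`; the case `k = -1` needs `11 * n = m + n + 37`.
  obtain rfl | rfl : k = 0 ∨ k = -1 := by omega
  all_goals omega

theorem stmt_15 :
    (∀ A : Multiset ℤ,
      (∀ a ∈ A, a ∈ ({1, -10} : Set ℤ)) →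
      (37 : ℤ) ∣ A.sum →
      (A.map hmap').sum ≠ (0, 0) →
      7 ≤ Multiset.card A) ∧
    ((({1, 1, 1, -10, -10, -10, -10} : Multiset ℤ).sum = -37) ∧
      (({1, 1, 1, -10, -10, -10, -10} : Multiset ℤ).map hmap').sum ≠ (0, 0)) := by
  refine ⟨fun A hA hdvd hne => ?_, by decide, by decide⟩
  have hA' : ∀ x ∈ A, x = 1 ∨ x = -10 := hA
  have hsum : A.sum = A.count 1 - 10 * A.count (-10) := by
    simpa [sub_eq_add_neg, mul_comm] using
      Multiset.sum_map_eq_count_nsmul_add_count_nsmul (by decide) hA' id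
  have hcard : Multiset.card A = A.count 1 + A.count (-10) := by
    simpa using Multiset.sum_map_eq_count_nsmul_add_count_nsmul (by decide) hA' fun _ => (1 : ℕ)
  have himage : (A.map hmap').sum = ((A.count 1 : ℤ), -(A.count (-10) : ℤ)) := by
    simpa [hmap'] using Multiset.sum_map_eq_count_nsmul_add_count_nsmul (by decide) hA' hmap'
  rw [hcard]
  refine seven_le_of_dvd_sub_ten_mul (hsum ▸ hdvd) ?_
  by_contra! h
  simp [himage, h] at hne
end

section
/- Let A be a multiset with elements from {+1, +10, +11}, nonempty, such that the sum of A is divisible by 37. Then |A| ≥ 7. -/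
/-- As `a + 10 b + 11 c = (a + c) + 10 (b + c)`, the only possible multiple of `37` when
`a + b + c ≤ 6` is `37` itself, which forces `a + c ≡ 7 [MOD 10]`. -/
lemma seven_le_of_dvd_add_ten_mul_add_eleven_mul {a b c : ℕ} (hpos : 0 < a + b + c)
    (hdvd : 37 ∣ a + 10 * b + 11 * c) : 7 ≤ a + b + c := by
  by_contra! hsmall
  have h37 : a + 10 * b + 11 * c = 37 := by
    obtain ⟨k, hk⟩ := hdvd
    have hk1 : k = 1 := by omega
    omega
  have hmod : (a + c) % 10 = 7 := by omega
  omega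

theorem stmt_16 (A : Multiset ℤ) (hne : A ≠ 0)
    (hA : ∀ a ∈ A, a ∈ ({1, 10, 11} : Set ℤ))
    (hsum : (37 : ℤ) ∣ A.sum) :
    7 ≤ Multiset.card A := by
  have hA' : ∀ a ∈ A, a ∈ ({1, 10, 11} : Finset ℤ) := by simpa using hA
  have hcard : Multiset.card A = A.count 1 + A.count 10 + A.count 11 := by
    rw [← Multiset.sum_count_eq_card hA', Finset.sum_insert (by decide),
      Finset.sum_pair (by decide), add_assoc]
  have hsum' : A.sum = ((A.count 1 + 10 * A.count 10 + 11 * A.count 11 : ℕ) : ℤ) := by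
    rw [Finset.sum_multiset_count_of_subset A _ fun x hx => hA' x (Multiset.mem_toFinset.mp hx),
      Finset.sum_insert (by decide), Finset.sum_pair (by decide)]
    push_cast
    ring
  rw [hcard]
  refine seven_le_of_dvd_add_ten_mul_add_eleven_mul ?_ (Int.natCast_dvd_natCast.mp (hsum' ▸ hsum))
  exact hcard ▸ Multiset.card_pos.mpr hne
end

section
/- The Cayley graph of ℤ/37ℤ with connection set {±1, ±10, ±11} has no independent set of size 10. -/
/-! Translations are automorphisms of `cayley`, so a 10-element independent set may be assumed to
contain `0`; removing `0` leaves 9 pairwise non-adjacent non-neighbours of `0`, and an exhaustive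
search, checked by the kernel, shows that there are no such 9. -/

/-- The Cayley graph Γ(ℤ₃₇, {1,10,11}). -/
def cayley : SimpleGraph (ZMod 37) :=
  SimpleGraph.fromRel (fun x y => x - y ∈ ({1, -1, 10, -10, 11, -11} : Set (ZMod 37)))

def hasIndepOfCard {α : Type*} (r : α → α → Bool) : ℕ → List α → Bool
  | 0, _ => true
  | k + 1, l => l.tails.any fun
    | [] => false
    | v :: t => hasIndepOfCard r k (t.filter fun w => !r v w)

lemma hasIndepOfCard_succ_cons {α : Type*} (r : α → α → Bool) (k : ℕ) (v : α) (t : List α) :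
    hasIndepOfCard r (k + 1) (v :: t) =
      (hasIndepOfCard r k (t.filter fun w => !r v w) || hasIndepOfCard r (k + 1) t) := rfl

namespace SimpleGraph

variable {α β : Type*} {G : SimpleGraph α} {k : ℕ} {s : Finset α}

lemma IsNIndepSet.map {H : SimpleGraph β} (hs : G.IsNIndepSet k s) (f : G ↪g H) :
    H.IsNIndepSet k (s.map f.toEmbedding) := by
  refine ⟨?_, by rw [Finset.card_map, hs.card_eq]⟩
  rw [Finset.coe_map]
  exact f.injective.injOn.pairwise_image.2 fun x hx y hy hxy =>
    f.map_adj_iff.not.2 (hs.isIndepSet hx hy hxy)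

lemma IsNIndepSet.erase_of_mem [DecidableEq α] (hs : G.IsNIndepSet (k + 1) s) {v : α}
    (hv : v ∈ s) : G.IsNIndepSet k (s.erase v) :=
  ⟨hs.isIndepSet.mono (by simp), by rw [Finset.card_erase_of_mem hv, hs.card_eq, k.add_sub_cancel]⟩

theorem IsNIndepSet.hasIndepOfCard_eq_true [DecidableEq α] [DecidableRel G.Adj]
    (hs : G.IsNIndepSet k s) {l : List α} (hsl : ∀ x ∈ s, x ∈ l) :
    hasIndepOfCard (fun x y => G.Adj x y) k l = true := by
  induction k generalizing s l with
  | zero => rfl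
  | succ k ihk =>
    induction l generalizing s with
    | nil =>
      obtain ⟨x, hx⟩ := Finset.card_pos.1 (show 0 < s.card by simp [hs.card_eq])
      exact absurd (hsl x hx) List.not_mem_nil
    | cons v t iht =>
      rw [hasIndepOfCard_succ_cons, Bool.or_eq_true]
      by_cases hv : v ∈ s
      · refine .inl (ihk (hs.erase_of_mem hv) fun x hx => ?_)
        obtain ⟨hxv, hxs⟩ := Finset.mem_erase.1 hx
        simp only [List.mem_filter, Bool.not_eq_true', decide_eq_false_iff_not]
        exact ⟨(List.mem_cons.1 (hsl x hxs)).resolve_left hxv, hs.isIndepSet hv hxs (Ne.symm hxv)⟩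
      · exact .inr (iht hs fun x hx =>
          (List.mem_cons.1 (hsl x hx)).resolve_left (ne_of_mem_of_not_mem hx hv))

end SimpleGraph

lemma cayley_adj_iff (x y : ZMod 37) : cayley.Adj x y ↔ x - y ∈ [1, -1, 10, -10, 11, -11] := by
  have key : ∀ d : ZMod 37, d ≠ 0 ∧ (d ∈ ({1, -1, 10, -10, 11, -11} : Set (ZMod 37)) ∨
      -d ∈ ({1, -1, 10, -10, 11, -11} : Set (ZMod 37))) ↔ d ∈ [1, -1, 10, -10, 11, -11] := by
    simp only [Set.mem_insert_iff, Set.mem_singleton_iff]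
    decide
  rw [cayley, SimpleGraph.fromRel_adj, ← key, neg_sub, sub_ne_zero]

instance : DecidableRel cayley.Adj := fun x y => decidable_of_iff _ (cayley_adj_iff x y).symm

def cayleySubRight (a : ZMod 37) : cayley ↪g cayley where
  toEmbedding := (Equiv.subRight a).toEmbedding
  map_rel_iff' {x y} := by
    simp only [Equiv.coe_toEmbedding, Equiv.subRight_apply, cayley_adj_iff,
      sub_sub_sub_cancel_right]

def cayleyNonNeighborsZero : List (ZMod 37) :=
  (List.range 37).map (fun n : ℕ => (n : ZMod 37)) |>.filter fun x => x ≠ 0 ∧ ¬ cayley.Adj 0 x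

lemma mem_cayleyNonNeighborsZero {x : ZMod 37} (hx : x ≠ 0) (hadj : ¬ cayley.Adj 0 x) :
    x ∈ cayleyNonNeighborsZero := by
  simp only [cayleyNonNeighborsZero, List.mem_filter, List.mem_map, List.mem_range]
  exact ⟨⟨x.val, x.val_lt, x.natCast_zmod_val⟩, by simp [hx, hadj]⟩

lemma hasIndepOfCard_cayleyNonNeighborsZero :
    hasIndepOfCard (fun x y => cayley.Adj x y) 9 cayleyNonNeighborsZero = false := by
  decide +kernel

theorem cayley_indepSetFree : cayley.IndepSetFree 10 := by
  intro s hs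
  obtain ⟨a, ha⟩ := Finset.card_pos.1 (show 0 < s.card by simp [hs.card_eq])
  have ht := hs.map (cayleySubRight a)
  have h0 : (0 : ZMod 37) ∈ s.map (cayleySubRight a).toEmbedding :=
    Finset.mem_map.2 ⟨a, ha, sub_self a⟩
  have hsearch := (ht.erase_of_mem h0).hasIndepOfCard_eq_true fun x hx =>
    have ⟨hx0, hxt⟩ := Finset.mem_erase.1 hx
    mem_cayleyNonNeighborsZero hx0 (ht.isIndepSet h0 hxt (Ne.symm hx0))
  rw [hasIndepOfCard_cayleyNonNeighborsZero] at hsearch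
  exact Bool.false_ne_true hsearch

theorem stmt_18 :
    ¬ ∃ s : Finset (ZMod 37), s.card = 10 ∧
      ∀ x ∈ s, ∀ y ∈ s, ¬ cayley.Adj x y := by
  rintro ⟨s, hcard, hindep⟩
  exact cayley_indepSetFree s ⟨fun x hx y hy _ => hindep x hx y hy, hcard⟩
end
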